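/- arXiv:1404.6321 — 3 statements merged into one kernel-verified Lean document; each statement's English description precedes it below -/
import Mathlib

section
/- (Bohlin–Sundman duality) Suppose w : ℝ → ℂ satisfies the Hooke equation w'' = -(k̃/m̃)·w and w(t) ≠ 0 for all t. Let τ : ℝ → ℝ satisfy τ' (t) = |w(t)|² and let z be defined by z(τ(t)) = w(t)². Then z satisfies the Kepler equation d²z/dτ² = -(C̃/m̃)·z/|z|³, where C̃ = 2·(m̃·|w'(0)|² + k̃·|w(0)|²). -/
/-!
The energy `m‖w'‖² + k‖w‖²` of the oscillator is conserved, so it equals `C / 2` at all times.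
Differentiating `z (τ t) = w t ^ 2` gives `‖w‖² · z' ∘ τ = 2 w w'`, i.e. `z' ∘ τ = 2 w' / w̄`;
differentiating once more gives `‖w‖² · z'' ∘ τ = 2 (w'' w̄ - ‖w'‖²) / w̄²`, which by Hooke's
equation is `-(2 / m) (k‖w‖² + m‖w'‖²) / w̄² = -(C / m) / w̄²`. Multiplying by `w²` and
using `z ∘ τ = w²`, `‖z ∘ τ‖³ = ‖w‖⁶` gives Kepler's equation.
-/

open Complex ComplexConjugate

theorem hooke_energy_eq {F : Type*} [NormedAddCommGroup F] [InnerProductSpace ℝ F]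
    {m k : ℝ} {u u' u'' : ℝ → F}
    (hu : ∀ t, HasDerivAt u (u' t) t) (hu' : ∀ t, HasDerivAt u' (u'' t) t)
    (hooke : ∀ t, m • u'' t + k • u t = 0) (t : ℝ) :
    m * ‖u' t‖ ^ 2 + k * ‖u t‖ ^ 2 = m * ‖u' 0‖ ^ 2 + k * ‖u 0‖ ^ 2 := by
  have hE : ∀ s, HasDerivAt (fun s ↦ m * ‖u' s‖ ^ 2 + k * ‖u s‖ ^ 2) 0 s := fun s ↦ by
    refine (((hu' s).norm_sq.const_mul m).add ((hu s).norm_sq.const_mul k)).congr_deriv ?_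
    have hpower := congrArg (fun v ↦ 2 * inner ℝ (u' s) v) (hooke s)
    simp only [inner_add_right, inner_smul_right, inner_zero_right, mul_zero] at hpower
    rw [real_inner_comm (u' s) (u s)]
    linarith
  exact is_const_of_deriv_eq_zero (fun s ↦ (hE s).differentiableAt) (fun s ↦ (hE s).deriv) t 0

theorem HasDerivAt.eq_smul_of_comp_eq {E : Type*} [NormedAddCommGroup E] [NormedSpace ℝ E]
    {z f : ℝ → E} {τ : ℝ → ℝ} {z' f' : E} {τ' t : ℝ}
    (hf : HasDerivAt f f' t) (hz : HasDerivAt z z' (τ t)) (hτ : HasDerivAt τ τ' t)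
    (hzf : ∀ s, z (τ s) = f s) : f' = τ' • z' :=
  hf.unique <| funext hzf ▸ hz.scomp t hτ

section Bohlin

variable {w w' z z' : ℝ → ℂ} {τ : ℝ → ℝ}

theorem bohlin_velocity (hw : ∀ t, HasDerivAt w (w' t) t) (hw0 : ∀ t, w t ≠ 0)
    (hτ : ∀ t, HasDerivAt τ (‖w t‖ ^ 2) t) (hz : ∀ s, HasDerivAt z (z' s) s)
    (hzw : ∀ t, z (τ t) = w t ^ 2) (t : ℝ) :
    z' (τ t) = 2 * w' t / conj (w t) := by
  have h := ((hw t).pow 2).eq_smul_of_comp_eq (hz (τ t)) (hτ t) hzw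
  rw [real_smul, ofReal_pow, ← mul_conj'] at h
  simp only [Nat.cast_ofNat] at h
  rw [eq_div_iff ((map_ne_zero _).mpr (hw0 t))]
  refine mul_left_cancel₀ (hw0 t) ?_
  linear_combination -h

theorem bohlin_acceleration {w'' z'' : ℝ → ℂ} (hw : ∀ t, HasDerivAt w (w' t) t)
    (hw' : ∀ t, HasDerivAt w' (w'' t) t) (hw0 : ∀ t, w t ≠ 0)
    (hτ : ∀ t, HasDerivAt τ (‖w t‖ ^ 2) t) (hz : ∀ s, HasDerivAt z (z' s) s)
    (hz' : ∀ s, HasDerivAt z' (z'' s) s) (hzw : ∀ t, z (τ t) = w t ^ 2) (t : ℝ) :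
    ‖w t‖ ^ 2 • z'' (τ t) =
      (2 * w'' t * conj (w t) - 2 * w' t * conj (w' t)) / conj (w t) ^ 2 := by
  have hv : HasDerivAt (fun s ↦ 2 * w' s / conj (w s))
      ((2 * w'' t * conj (w t) - 2 * w' t * conj (w' t)) / conj (w t) ^ 2) t := by
    simpa only [Complex.star_def] using
      ((hw' t).const_mul 2).fun_div (hw t).star (by simpa using hw0 t)
  exact (hv.eq_smul_of_comp_eq (hz' (τ t)) (hτ t)
    (bohlin_velocity hw hw0 hτ hz hzw)).symm

end Bohlin

theorem stmt_2_general (m k : ℝ) (hm : 0 < m)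
    (w w' w'' : ℝ → ℂ)
    (hw : ∀ t, HasDerivAt w (w' t) t)
    (hw' : ∀ t, HasDerivAt w' (w'' t) t)
    (heq : ∀ t, w'' t = -((k / m : ℝ) : ℂ) * w t)
    (hw0 : ∀ t, w t ≠ 0)
    (τ : ℝ → ℝ)
    (hτ : ∀ t, HasDerivAt τ (‖w t‖ ^ 2) t)
    (z z' z'' : ℝ → ℂ)
    (hz : ∀ s, HasDerivAt z (z' s) s)
    (hz' : ∀ s, HasDerivAt z' (z'' s) s)
    (hzw : ∀ t, z (τ t) = (w t) ^ 2)
    (C : ℝ) (hC : C = 2 * (m * ‖w' 0‖ ^ 2 + k * ‖w 0‖ ^ 2)) :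
    ∀ t, z'' (τ t) = -((C / m : ℝ) : ℂ) * z (τ t) / ((‖z (τ t)‖ ^ 3 : ℝ) : ℂ) := by
  intro t
  have hm' : (m : ℂ) ≠ 0 := by exact_mod_cast hm.ne'
  have hooke : ∀ t, m • w'' t + k • w t = 0 := fun t ↦ by
    rw [heq, real_smul, real_smul]
    push_cast
    field_simp
    ring
  have hC' : C = 2 * (m * ‖w' t‖ ^ 2 + k * ‖w t‖ ^ 2) := by
    rw [hC, hooke_energy_eq hw hw' hooke t]
  have hacc := bohlin_acceleration hw hw' hw0 hτ hz hz' hzw t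
  rw [heq, real_smul] at hacc
  rw [hzw, norm_pow, hC']
  push_cast at hacc ⊢
  rw [← mul_conj'] at hacc
  rw [← mul_conj', ← mul_conj']
  have ha := hw0 t
  have ha' : conj (w t) ≠ 0 := (map_ne_zero _).mpr ha
  field_simp at hacc ⊢
  linear_combination hacc

/-- Bohlin–Sundman duality: if `w` solves Hooke's equation
`w'' = -(k̃/m̃)·w`, is nowhere zero, `τ' = |w|²`, `τ(0) = 0`, and `z(τ(t)) = w(t)²`,
then `z` solves the Kepler equation `z'' = -(C̃/m̃)·z/|z|³` along the curve, where
`C̃ = 2(m̃·|w'(0)|² + k̃·|w(0)|²)`. -/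
theorem stmt_2 (m k : ℝ) (hm : 0 < m) (hk : 0 < k)
    (w w' w'' : ℝ → ℂ)
    (hw : ∀ t, HasDerivAt w (w' t) t)
    (hw' : ∀ t, HasDerivAt w' (w'' t) t)
    (heq : ∀ t, w'' t = -((k / m : ℝ) : ℂ) * w t)
    (hw0 : ∀ t, w t ≠ 0)
    (τ : ℝ → ℝ)
    (hτ : ∀ t, HasDerivAt τ (‖w t‖ ^ 2) t) (hτ0 : τ 0 = 0)
    (z z' z'' : ℝ → ℂ)
    (hz : ∀ s, HasDerivAt z (z' s) s)
    (hz' : ∀ s, HasDerivAt z' (z'' s) s)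
    (hzw : ∀ t, z (τ t) = (w t) ^ 2)
    (C : ℝ) (hC : C = 2 * (m * ‖w' 0‖ ^ 2 + k * ‖w 0‖ ^ 2)) :
    ∀ t, z'' (τ t) = -((C / m : ℝ) : ℂ) * z (τ t) / ((‖z (τ t)‖ ^ 3 : ℝ) : ℂ) :=
  stmt_2_general m k hm w w' w'' hw hw' heq hw0 τ hτ z z' z'' hz hz' hzw C hC
end

section
/- If z : ℝ → ℂ is nowhere zero and satisfies the Kepler equation z'' = -(C̃/m̃)·z/|z|³ with m̃ > 0, then the Kepler energy E_K = (m̃/2)·|z'|² - C̃/|z| is constant in time. -/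
/-!
Along any trajectory the Kepler energy `m/2 ‖v‖² - C/‖x‖` has time derivative
`⟪v, m a + (C/‖x‖³) x⟫`, and Newton's equation `m a = -(C/‖x‖³) x` makes the second factor
vanish.
-/

open scoped RealInnerProductSpace

section

variable {F : Type*} [NormedAddCommGroup F] [InnerProductSpace ℝ F]

theorem HasDerivAt.norm {f : ℝ → F} {f' : F} {x : ℝ} (hf : HasDerivAt f f' x) (h0 : f x ≠ 0) :
    HasDerivAt (‖f ·‖) (⟪f x, f'⟫ / ‖f x‖) x := by
  have hsqrt := hf.norm_sq.sqrt (by simpa using h0)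
  simp only [Real.sqrt_sq (norm_nonneg _)] at hsqrt
  convert hsqrt using 1
  field_simp

noncomputable def keplerEnergy (m C : ℝ) (x v : F) : ℝ :=
  m / 2 * ‖v‖ ^ 2 - C / ‖x‖

theorem hasDerivAt_keplerEnergy (m C : ℝ) {x v : ℝ → F} {a : F} {t : ℝ}
    (hx : HasDerivAt x (v t) t) (hv : HasDerivAt v a t) (h0 : x t ≠ 0) :
    HasDerivAt (fun s => keplerEnergy m C (x s) (v s))
      ⟪v t, m • a + (C / ‖x t‖ ^ 3) • x t⟫ t := by
  have hpos : 0 < ‖x t‖ := norm_pos_iff.mpr h0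
  have hkin := hv.norm_sq.const_mul (m / 2)
  have hpot := ((hx.norm h0).inv hpos.ne').const_mul C
  refine (hkin.sub hpot).congr_deriv ?_
  rw [inner_add_right, real_inner_smul_right, real_inner_smul_right, real_inner_comm (x t)]
  field_simp
  ring

theorem keplerEnergy_eq_of_hasDerivAt (m C : ℝ) {x v a : ℝ → F}
    (hx : ∀ t, HasDerivAt x (v t) t) (hv : ∀ t, HasDerivAt v (a t) t) (h0 : ∀ t, x t ≠ 0)
    (hnewton : ∀ t, m • a t = -(C / ‖x t‖ ^ 3) • x t) (t s : ℝ) :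
    keplerEnergy m C (x t) (v t) = keplerEnergy m C (x s) (v s) := by
  have hderiv : ∀ t, HasDerivAt (fun s => keplerEnergy m C (x s) (v s)) 0 t := fun t => by
    simpa [hnewton t] using hasDerivAt_keplerEnergy m C (hx t) (hv t) (h0 t)
  exact is_const_of_deriv_eq_zero (fun t => (hderiv t).differentiableAt)
    (fun t => (hderiv t).deriv) t s

end

/-- For a nowhere-vanishing solution of the Kepler equation
`z'' = -(C̃/m̃)·z/|z|³` with `m̃ > 0`, the Kepler energy
`E_K = (m̃/2)·|z'|² - C̃/|z|` is constant in time. -/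
theorem stmt_4 (m C : ℝ) (hm : 0 < m)
    (z z' z'' : ℝ → ℂ)
    (hz : ∀ τ, HasDerivAt z (z' τ) τ)
    (hz' : ∀ τ, HasDerivAt z' (z'' τ) τ)
    (hz0 : ∀ τ, z τ ≠ 0)
    (heq : ∀ τ, z'' τ = -((C / m : ℝ) : ℂ) * z τ / ((‖z τ‖ ^ 3 : ℝ) : ℂ))
    (E : ℝ → ℝ)
    (hE : ∀ τ, E τ = (m / 2) * ‖z' τ‖ ^ 2 - C / ‖z τ‖) :
    ∀ τ σ : ℝ, E τ = E σ := by
  have hnewton : ∀ τ, m • z'' τ = -(C / ‖z τ‖ ^ 3) • z τ := fun τ => by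
    rw [heq τ, Complex.real_smul, Complex.real_smul]
    push_cast
    field_simp [hm.ne']
  intro τ σ
  simpa only [hE, keplerEnergy] using keplerEnergy_eq_of_hasDerivAt m C hz hz' hz0 hnewton τ σ
end

section
/- For the dual Kepler motion obtained from a harmonic oscillator via the Bohlin–Sundman transformation, the Kepler energy satisfies E_K = -2·k̃: if w'' = -(k̃/m̃)·w, C̃ = 2·(m̃·|ẇ(0)|² + k̃·|w(0)|²), and z(τ(t)) = w(t)² with τ'=|w|², then (m̃/2)·|z'|² - C̃/|z| = -2·k̃ at every time. -/
/-!
By the chain rule `|w|² z'(τ) = 2 w w'`, so `|z'| = 2|w'|/|w|` and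
`|z| = |w|²`; hence the Kepler energy `(m/2)|z'|² - C/|z|` equals
`(2 m |w'|² - C) / |w|²`. Conservation of the oscillator energy `m|w'|² + k|w|²` turns `C`
into `2 (m |w'(t)|² + k |w(t)|²)` at every time, and the quotient collapses to `-2k`.
-/

open RealInnerProductSpace

lemma oscillator_energy_eq {E : Type*} [NormedAddCommGroup E] [InnerProductSpace ℝ E]
    {m k : ℝ} {w w' w'' : ℝ → E}
    (hw : ∀ t, HasDerivAt w (w' t) t) (hw' : ∀ t, HasDerivAt w' (w'' t) t)
    (heq : ∀ t, m • w'' t = -(k • w t)) (s t : ℝ) :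
    m * ‖w' s‖ ^ 2 + k * ‖w s‖ ^ 2 = m * ‖w' t‖ ^ 2 + k * ‖w t‖ ^ 2 := by
  have hderiv : ∀ u, HasDerivAt (fun u => m * ‖w' u‖ ^ 2 + k * ‖w u‖ ^ 2) 0 u := by
    intro u
    refine (((hw' u).norm_sq.const_mul m).add ((hw u).norm_sq.const_mul k)).congr_deriv ?_
    have hinner : m * ⟪w' u, w'' u⟫ = -(k * ⟪w' u, w u⟫) := by
      rw [← inner_smul_right, heq u, inner_neg_right, inner_smul_right]
    rw [real_inner_comm (w' u) (w u)]
    linear_combination 2 * hinner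
  exact is_const_of_deriv_eq_zero (fun u => (hderiv u).differentiableAt)
    (fun u => (hderiv u).deriv) s t

lemma norm_deriv_of_comp_eq_sq {w z z' : ℝ → ℂ} {τ : ℝ → ℝ} {w' : ℂ} {t : ℝ}
    (hw : HasDerivAt w w' t) (hwt : w t ≠ 0) (hτ : HasDerivAt τ (‖w t‖ ^ 2) t)
    (hz : HasDerivAt z (z' (τ t)) (τ t)) (hzw : ∀ u, z (τ u) = w u ^ 2) :
    ‖z' (τ t)‖ = 2 * ‖w'‖ / ‖w t‖ := by
  have hchain : HasDerivAt (fun u => z (τ u)) ((‖w t‖ ^ 2) • z' (τ t)) t := hz.scomp t hτ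
  have hsq : HasDerivAt (fun u => z (τ u)) (2 * w t * w') t := by
    simp only [hzw]
    exact (hw.fun_pow 2).congr_deriv (by norm_num)
  have hnorm := congrArg norm (hchain.unique hsq)
  rw [norm_smul, norm_mul, norm_mul, Real.norm_of_nonneg (by positivity),
    Complex.norm_ofNat] at hnorm
  have hwpos : 0 < ‖w t‖ := norm_pos_iff.mpr hwt
  field_simp
  nlinarith [hnorm]

theorem stmt_5_general (m k : ℝ) (hm : 0 < m)
    (w w' w'' : ℝ → ℂ)
    (hw : ∀ t, HasDerivAt w (w' t) t)
    (hw' : ∀ t, HasDerivAt w' (w'' t) t)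
    (heq : ∀ t, w'' t = -((k / m : ℝ) : ℂ) * w t)
    (hw0 : ∀ t, w t ≠ 0)
    (τ : ℝ → ℝ)
    (hτ : ∀ t, HasDerivAt τ (‖w t‖ ^ 2) t)
    (z z' : ℝ → ℂ)
    (hz : ∀ s, HasDerivAt z (z' s) s)
    (hzw : ∀ t, z (τ t) = (w t) ^ 2)
    (C : ℝ) (hC : C = 2 * (m * ‖w' 0‖ ^ 2 + k * ‖w 0‖ ^ 2)) :
    ∀ t, (m / 2) * ‖z' (τ t)‖ ^ 2 - C / ‖z (τ t)‖ = -2 * k := by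
  intro t
  have hosc : ∀ s, m • w'' s = -(k • w s) := fun s => by
    rw [heq s, Complex.real_smul, Complex.real_smul, Complex.ofReal_div]
    field_simp [hm.ne']
  have hCt : C = 2 * (m * ‖w' t‖ ^ 2 + k * ‖w t‖ ^ 2) := by
    rw [hC, oscillator_energy_eq hw hw' hosc 0 t]
  have hvel := norm_deriv_of_comp_eq_sq (hw t) (hw0 t) (hτ t) (hz (τ t)) hzw
  have hwpos : 0 < ‖w t‖ := norm_pos_iff.mpr (hw0 t)
  rw [hvel, hzw t, norm_pow, hCt]
  field_simp
  ring

/-- for the dual Kepler motion obtained via the Bohlin–Sundman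
transformation from an oscillator `w'' = -(k̃/m̃)·w`, with
`C̃ = 2(m̃·|ẇ(0)|² + k̃·|w(0)|²)`, the Kepler energy satisfies
`(m̃/2)·|z'|² - C̃/|z| = -2·k̃` at every time. -/
theorem stmt_5 (m k : ℝ) (hm : 0 < m) (hk : 0 < k)
    (w w' w'' : ℝ → ℂ)
    (hw : ∀ t, HasDerivAt w (w' t) t)
    (hw' : ∀ t, HasDerivAt w' (w'' t) t)
    (heq : ∀ t, w'' t = -((k / m : ℝ) : ℂ) * w t)
    (hw0 : ∀ t, w t ≠ 0)
    (τ : ℝ → ℝ)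
    (hτ : ∀ t, HasDerivAt τ (‖w t‖ ^ 2) t)
    (z z' : ℝ → ℂ)
    (hz : ∀ s, HasDerivAt z (z' s) s)
    (hzw : ∀ t, z (τ t) = (w t) ^ 2)
    (C : ℝ) (hC : C = 2 * (m * ‖w' 0‖ ^ 2 + k * ‖w 0‖ ^ 2)) :
    ∀ t, (m / 2) * ‖z' (τ t)‖ ^ 2 - C / ‖z (τ t)‖ = -2 * k :=
  stmt_5_general m k hm w w' w'' hw hw' heq hw0 τ hτ z z' hz hzw C hC
end
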